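/- arXiv:2111.04363 — 2 statements merged into one kernel-verified Lean document; each statement's English description precedes it below -/
import Mathlib

section
/- For any connected graphs G and H of orders n ≥ 3 and m ≥ 3 respectively, γ_rdR(G ⊠ H) ≤ γ_rdR(G)·γ_rdR(H) − 6. -/
open SimpleGraph Finset

/-- A restrained double Roman dominating function. -/
def IsRDRD {α : Type*} (G : SimpleGraph α) (f : α → ℕ) : Prop :=
  (∀ v, f v ≤ 3) ∧
  (∀ v, f v = 0 →
    (∃ u, G.Adj v u ∧ f u = 3) ∨
    (∃ u w, u ≠ w ∧ G.Adj v u ∧ G.Adj v w ∧ f u = 2 ∧ f w = 2)) ∧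
  (∀ v, f v = 1 → ∃ u, G.Adj v u ∧ 2 ≤ f u) ∧
  (∀ v, f v = 0 → ∃ u, G.Adj v u ∧ f u = 0)

/-- The restrained double Roman domination number. -/
noncomputable def gammaRdR {α : Type*} (G : SimpleGraph α) [Fintype α] : ℕ :=
  sInf {w | ∃ f, IsRDRD G f ∧ ∑ v, f v = w}

/-- The strong product of two simple graphs. -/
def strongProd {α β : Type*} (G : SimpleGraph α) (H : SimpleGraph β) :
    SimpleGraph (α × β) where
  Adj p q := p ≠ q ∧ (G.Adj p.1 q.1 ∨ p.1 = q.1) ∧ (H.Adj p.2 q.2 ∨ p.2 = q.2)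
  symm := by
    constructor
    rintro p q ⟨h1, h2, h3⟩
    exact ⟨h1.symm, h2.imp (fun h => G.adj_symm h) Eq.symm, h3.imp (fun h => H.adj_symm h) Eq.symm⟩
  loopless := by constructor; rintro p ⟨h1, _⟩; exact h1 rfl

/-- The cardinal (direct/tensor) product of two simple graphs. -/
def cardProd {α β : Type*} (G : SimpleGraph α) (H : SimpleGraph β) :
    SimpleGraph (α × β) where
  Adj p q := G.Adj p.1 q.1 ∧ H.Adj p.2 q.2
  symm := by constructor; rintro p q ⟨h1, h2⟩; exact ⟨h1.symm, h2.symm⟩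
  loopless := by constructor; rintro p ⟨h1, _⟩; exact G.irrefl h1

/-- The corona of two simple graphs. -/
def corona {α β : Type*} (G : SimpleGraph α) (H : SimpleGraph β) :
    SimpleGraph (α ⊕ α × β) where
  Adj x y :=
    match x, y with
    | .inl u, .inl v => G.Adj u v
    | .inl u, .inr (v, _) => u = v
    | .inr (v, _), .inl u => u = v
    | .inr (u, a), .inr (v, b) => u = v ∧ H.Adj a b
  symm := by
    constructor
    rintro (u | ⟨u, a⟩) (v | ⟨v, b⟩) h
    · exact h.symm
    · exact h
    · exact h
    · exact ⟨h.1.symm, h.2.symm⟩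
  loopless := by
    constructor
    rintro (u | ⟨u, a⟩) h
    · exact G.irrefl h
    · exact H.irrefl h.2


/-!
From optimal RDRD-functions `f` of `G` and `g` of `H`, label `(u, v)` by `0` if `f u` or `g v` is
`0`, by `1` if one of them is `1`, and by `max (f u) (g v)` otherwise. This is an RDRD-function of
the strong product: a vertex `(u, v)` with `f u = 0` is dominated from the row of a closed neighbour
of `v` that carries a label `≥ 2`. Its weight falls short of `w(f) w(g) = ∑ f u * g v` by at least
`6`: on at least three vertices every RDRD-function takes the value `3`, or the value `2` twice, or
`2` once and `1` twice, and on the product of two such vertex sets the labels already lose `6`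
against `f u * g v`.
-/

section StrongProdRDRD

variable {α β : Type*}

def labelProd (x y : ℕ) : ℕ :=
  if x = 0 ∨ y = 0 then 0 else if x = 1 ∨ y = 1 then 1 else max x y

lemma labelProd_comm (x y : ℕ) : labelProd x y = labelProd y x := by
  unfold labelProd
  simp only [or_comm, max_comm]

lemma labelProd_eq_zero_iff {x y : ℕ} : labelProd x y = 0 ↔ x = 0 ∨ y = 0 := by
  unfold labelProd
  split_ifs <;> simp_all

lemma labelProd_le_three {x y : ℕ} (hx : x ≤ 3) (hy : y ≤ 3) : labelProd x y ≤ 3 := by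
  unfold labelProd
  split_ifs <;> omega

lemma labelProd_of_two_le {x y : ℕ} (hx : 2 ≤ x) (hy : 2 ≤ y) : labelProd x y = max x y := by
  unfold labelProd
  split_ifs <;> omega

lemma labelProd_le_mul (x y : ℕ) : labelProd x y ≤ x * y := by
  unfold labelProd
  split_ifs with h0 h1
  · exact Nat.zero_le _
  · exact Nat.one_le_iff_ne_zero.mpr (Nat.mul_ne_zero (by omega) (by omega))
  · exact max_le (Nat.le_mul_of_pos_right x (by omega)) (Nat.le_mul_of_pos_left y (by omega))

def labelSaving (x y : ℕ) : ℕ := x * y - labelProd x y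

lemma labelProd_add_labelSaving (x y : ℕ) : labelProd x y + labelSaving x y = x * y :=
  Nat.add_sub_cancel' (labelProd_le_mul x y)

def rdrdCores : List (Multiset ℕ) := [{3}, {2, 2}, {2, 1, 1}]

lemma six_le_sum_labelSaving :
    ∀ M ∈ rdrdCores, ∀ N ∈ rdrdCores, 6 ≤ (M.map fun x => (N.map (labelSaving x)).sum).sum := by
  decide

section StrongProd

variable {G : SimpleGraph α} {H : SimpleGraph β}

lemma strongProd_adj_of_adj_left {u a : α} {v b : β} (ha : G.Adj u a) (hb : H.Adj v b ∨ v = b) :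
    (strongProd G H).Adj (u, v) (a, b) :=
  ⟨fun h => G.ne_of_adj ha (congrArg Prod.fst h), Or.inl ha, hb⟩

lemma strongProd_adj_of_adj_right {u a : α} {v b : β} (ha : G.Adj u a ∨ u = a) (hb : H.Adj v b) :
    (strongProd G H).Adj (u, v) (a, b) :=
  ⟨fun h => H.ne_of_adj hb (congrArg Prod.snd h), ha, Or.inl hb⟩

variable (G H) in
def strongProdSwap : strongProd H G →g strongProd G H where
  toFun := Prod.swap
  map_rel' := fun ⟨hne, h₁, h₂⟩ => ⟨fun h => hne (Prod.swap_injective h), h₂, h₁⟩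

end StrongProd

section RDRD

variable {G : SimpleGraph α} {f : α → ℕ}

def IsDoubleRomanDominated (G : SimpleGraph α) (f : α → ℕ) (v : α) : Prop :=
  (∃ u, G.Adj v u ∧ f u = 3) ∨ (∃ u w, u ≠ w ∧ G.Adj v u ∧ G.Adj v w ∧ f u = 2 ∧ f w = 2)

lemma IsDoubleRomanDominated.map {γ : Type*} {G' : SimpleGraph γ} (φ : G' →g G)
    (hφ : Function.Injective φ) {v : γ} (h : IsDoubleRomanDominated G' (f ∘ φ) v) :
    IsDoubleRomanDominated G f (φ v) := by
  rcases h with ⟨u, hu, h3⟩ | ⟨u, w, hne, hu, hw, hu2, hw2⟩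
  · exact Or.inl ⟨φ u, φ.map_adj hu, h3⟩
  · exact Or.inr ⟨φ u, φ w, hφ.ne hne, φ.map_adj hu, φ.map_adj hw, hu2, hw2⟩

lemma IsRDRD.exists_two_le_of_adj_or_eq (hf : IsRDRD G f) (v : α) :
    ∃ a, (G.Adj v a ∨ v = a) ∧ 2 ≤ f a := by
  obtain ⟨hf3, hf0, hf1, -⟩ := hf
  rcases Nat.lt_or_ge (f v) 2 with hv | hv
  · rcases Nat.lt_or_ge (f v) 1 with hv0 | hv1
    · rcases hf0 v (by omega) with ⟨a, ha, ha3⟩ | ⟨a, -, -, ha, -, ha2, -⟩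
      · exact ⟨a, Or.inl ha, by omega⟩
      · exact ⟨a, Or.inl ha, by omega⟩
    · obtain ⟨a, ha, ha2⟩ := hf1 v (by omega)
      exact ⟨a, Or.inl ha, ha2⟩
  · exact ⟨v, Or.inr rfl, hv⟩

lemma IsRDRD.exists_core [Fintype α] (hf : IsRDRD G f) (hn : 3 ≤ Fintype.card α) :
    ∃ s : Finset α, s.val.map f ∈ rdrdCores := by
  classical
  have : Nonempty α := Fintype.card_pos_iff.mp (by omega)
  obtain ⟨u₀, -, hu₀⟩ := hf.exists_two_le_of_adj_or_eq (Classical.arbitrary α)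
  by_cases h3 : ∃ u, f u = 3
  · obtain ⟨u, hu⟩ := h3
    exact ⟨{u}, by simp [hu, rdrdCores]⟩
  push Not at h3
  have hu₀2 : f u₀ = 2 := by have := hf.1 u₀; have := h3 u₀; omega
  by_cases h2 : ∃ u, u ≠ u₀ ∧ f u = 2
  · obtain ⟨u, hne, hu⟩ := h2
    exact ⟨{u₀, u}, by simp [hne.symm, hu₀2, hu, rdrdCores]⟩
  push Not at h2
  -- `u₀` is the only vertex with label `≥ 2`, so no vertex can be labelled `0`.
  have h1 : ∀ u, u ≠ u₀ → f u = 1 := by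
    intro u hu
    have hne0 : f u ≠ 0 := fun h0 => by
      rcases hf.2.1 u h0 with ⟨a, -, ha⟩ | ⟨a, b, hab, -, -, ha, hb⟩
      · exact h3 a ha
      · exact hab ((not_imp_comm.mp (h2 a) (by omega)).trans
          (not_imp_comm.mp (h2 b) (by omega)).symm)
    have := hf.1 u; have := h3 u; have := h2 u hu; omega
  have hcard : 1 < (univ.erase u₀).card := by
    rw [card_erase_of_mem (mem_univ u₀), card_univ]; omega
  obtain ⟨u₁, u₂, hu₁, hu₂, h12⟩ := one_lt_card_iff.mp hcard
  rw [mem_erase] at hu₁ hu₂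
  refine ⟨{u₀, u₁, u₂}, ?_⟩
  simp [h12, hu₁.1.symm, hu₂.1.symm, hu₀2, h1 u₁ hu₁.1, h1 u₂ hu₂.1, rdrdCores]

end RDRD

section Product

variable {G : SimpleGraph α} {H : SimpleGraph β} {f : α → ℕ} {g : β → ℕ}

def labelProdFun (f : α → ℕ) (g : β → ℕ) (p : α × β) : ℕ := labelProd (f p.1) (g p.2)

lemma labelProdFun_comp_swap (f : α → ℕ) (g : β → ℕ) :
    labelProdFun f g ∘ Prod.swap = labelProdFun g f :=
  funext fun _ => labelProd_comm _ _

lemma isDoubleRomanDominated_labelProdFun_of_left (hf : IsRDRD G f) (hg : IsRDRD H g)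
    {u : α} (hu : f u = 0) (v : β) :
    IsDoubleRomanDominated (strongProd G H) (labelProdFun f g) (u, v) := by
  obtain ⟨b, hvb, hb⟩ := hg.exists_two_le_of_adj_or_eq v
  have hb3 := hg.1 b
  rcases hf.2.1 u hu with ⟨a, ha, ha3⟩ | ⟨a₁, a₂, hne, ha₁, ha₂, ha₁2, ha₂2⟩
  · refine Or.inl ⟨(a, b), strongProd_adj_of_adj_left ha hvb, ?_⟩
    show labelProd (f a) (g b) = 3
    rw [ha3, labelProd_of_two_le (by norm_num) hb]
    omega
  rcases (show g b = 2 ∨ g b = 3 by omega) with hb2 | hb3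
  · refine Or.inr ⟨(a₁, b), (a₂, b), by simp [hne], strongProd_adj_of_adj_left ha₁ hvb,
      strongProd_adj_of_adj_left ha₂ hvb, ?_, ?_⟩ <;>
      simp [labelProdFun, labelProd, ha₁2, ha₂2, hb2]
  · exact Or.inl ⟨(a₁, b), strongProd_adj_of_adj_left ha₁ hvb,
      by simp [labelProdFun, labelProd, ha₁2, hb3]⟩

theorem IsRDRD.strongProd (hf : IsRDRD G f) (hg : IsRDRD H g) :
    IsRDRD (strongProd G H) (labelProdFun f g) := by
  refine ⟨fun _ => labelProd_le_three (hf.1 _) (hg.1 _), ?_, ?_, ?_⟩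
  · rintro ⟨u, v⟩ h0
    rcases labelProd_eq_zero_iff.mp h0 with hu | hv
    · exact isDoubleRomanDominated_labelProdFun_of_left hf hg hu v
    · have := isDoubleRomanDominated_labelProdFun_of_left hg hf hv u
      rw [← labelProdFun_comp_swap] at this
      exact this.map (strongProdSwap G H) Prod.swap_injective
  · rintro ⟨u, v⟩ h1
    obtain ⟨a, hua, ha⟩ := hf.exists_two_le_of_adj_or_eq u
    obtain ⟨b, hvb, hb⟩ := hg.exists_two_le_of_adj_or_eq v
    have hab : 2 ≤ labelProdFun f g (a, b) := by
      simp only [labelProdFun, labelProd_of_two_le ha hb]; omega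
    refine ⟨(a, b), ⟨fun h => ?_, hua, hvb⟩, hab⟩
    rw [← h] at hab
    omega
  · rintro ⟨u, v⟩ h0
    rcases labelProd_eq_zero_iff.mp h0 with hu | hv
    · obtain ⟨a, ha, ha0⟩ := hf.2.2.2 u hu
      exact ⟨(a, v), strongProd_adj_of_adj_left ha (Or.inr rfl),
        by simp [labelProdFun, labelProd, ha0]⟩
    · obtain ⟨b, hb, hb0⟩ := hg.2.2.2 v hv
      exact ⟨(u, b), strongProd_adj_of_adj_right (Or.inr rfl) hb,
        by simp [labelProdFun, labelProd, hb0]⟩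

theorem sum_labelProdFun_add_six_le [Fintype α] [Fintype β] (hf : IsRDRD G f) (hg : IsRDRD H g)
    (hn : 3 ≤ Fintype.card α) (hm : 3 ≤ Fintype.card β) :
    ∑ p, labelProdFun f g p + 6 ≤ (∑ u, f u) * ∑ v, g v := by
  classical
  obtain ⟨s, hs⟩ := hf.exists_core hn
  obtain ⟨t, ht⟩ := hg.exists_core hm
  have hsaving : 6 ≤ ∑ p : α × β, labelSaving (f p.1) (g p.2) :=
    calc 6 ≤ ((s.val.map f).map fun x => ((t.val.map g).map (labelSaving x)).sum).sum :=
          six_le_sum_labelSaving _ hs _ ht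
      _ = ∑ p ∈ s ×ˢ t, labelSaving (f p.1) (g p.2) := by
          rw [sum_product]
          simp only [sum_eq_multiset_sum, Multiset.map_map, Function.comp_def]
      _ ≤ _ := sum_le_sum_of_subset (subset_univ _)
  calc ∑ p, labelProdFun f g p + 6
      ≤ ∑ p : α × β, (labelProd (f p.1) (g p.2) + labelSaving (f p.1) (g p.2)) := by
        rw [sum_add_distrib]; exact Nat.add_le_add_left hsaving _
    _ = (∑ u, f u) * ∑ v, g v := by
        simp only [labelProd_add_labelSaving, sum_mul_sum, ← univ_product_univ, sum_product]

end Product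

section DominationNumber

variable [Fintype α] {G : SimpleGraph α}

lemma gammaRdR_le {f : α → ℕ} (hf : IsRDRD G f) : gammaRdR G ≤ ∑ v, f v :=
  Nat.sInf_le ⟨f, hf, rfl⟩

lemma exists_isRDRD_sum_eq_gammaRdR (G : SimpleGraph α) :
    ∃ f, IsRDRD G f ∧ ∑ v, f v = gammaRdR G :=
  Nat.sInf_mem (s := {w | ∃ f, IsRDRD G f ∧ ∑ v, f v = w})
    ⟨_, fun _ => 3, ⟨fun _ => le_rfl, by simp, by simp, by simp⟩, rfl⟩

end DominationNumber

end StrongProdRDRD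

theorem stmt3_general {α β : Type*} [Fintype α] [Fintype β]
    (G : SimpleGraph α) (H : SimpleGraph β)
    (hn : 3 ≤ Fintype.card α) (hm : 3 ≤ Fintype.card β) :
    (gammaRdR (strongProd G H) : ℤ) ≤ (gammaRdR G : ℤ) * gammaRdR H - 6 := by
  obtain ⟨f, hf, hfw⟩ := exists_isRDRD_sum_eq_gammaRdR G
  obtain ⟨g, hg, hgw⟩ := exists_isRDRD_sum_eq_gammaRdR H
  have hle := gammaRdR_le (hf.strongProd hg)
  have hsum := sum_labelProdFun_add_six_le hf hg hn hm
  rw [hfw, hgw] at hsum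
  rw [← Nat.cast_mul]
  omega

theorem stmt3 {α β : Type*} [Fintype α] [Fintype β]
    (G : SimpleGraph α) (H : SimpleGraph β)
    (hG : G.Connected) (hH : H.Connected)
    (hn : 3 ≤ Fintype.card α) (hm : 3 ≤ Fintype.card β) :
    (gammaRdR (strongProd G H) : ℤ) ≤ (gammaRdR G : ℤ) * gammaRdR H - 6 :=
  stmt3_general G H hn hm
end

section
/- For n ≥ 3, γ_rdR(C_n ⊙ K₁) = ⌈7n/3⌉ if n ≡ 0 or 1 (mod 3), and ⌈7n/3⌉ + 1 if n ≡ 2 (mod 3). -/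
/-!
Put `w v = f(v) + f(v')` for a cycle vertex `v` with pendant `v'`. A pendant vertex cannot be
assigned `0`, and if it is assigned `1` its support carries at least `2`, so `w v ≥ 2`, with
equality only for `f(v) = 0, f(v') = 2`. Such a vertex `v` needs a cycle neighbour assigned `0`
(restraint) and one assigned at least `2` (domination), so no three consecutive vertices have
`w = 2` and the windows `w i + w (i+1) + w (i+2)` are all at least `7`. Summing over the `n`
windows gives `3 Σ f ≥ 7n`. For `n ≡ 2 (mod 3)` equality `3 Σ f = 7n + 1` would force a single
window of weight `8` and all others of weight `7`, i.e. the weights `2,2,3,2,3,2,2` around it;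
the outer pairs of `2`s force both cycle neighbours of the middle `2` to carry at least `2`,
leaving it without a neighbour assigned `0`. Assigning `2` to every third cycle vertex
and to the last `n % 3` ones, `1` to their pendants and `0`, `2` to the remaining pairs attains
the bound.
-/

open SimpleGraph Finset

open Fin.CommRing

theorem gammaRdR_eq_of_forall_le {α : Type*} [Fintype α] {G : SimpleGraph α} {f : α → ℕ}
    {k : ℕ} (hf : IsRDRD G f) (hk : ∑ v, f v = k) (hmin : ∀ g, IsRDRD G g → k ≤ ∑ v, g v) :
    gammaRdR G = k :=
  le_antisymm (Nat.sInf_le ⟨f, hf, hk⟩)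
    (le_csInf ⟨k, f, hf, hk⟩ (by rintro _ ⟨g, hg, rfl⟩; exact hmin g hg))

theorem exists_eq_add_one_of_sum_eq_mul_card_add_one {ι : Type*} [Fintype ι] [DecidableEq ι]
    {W : ι → ℕ} {c : ℕ} (hW : ∀ i, c ≤ W i) (hsum : ∑ i, W i = c * Fintype.card ι + 1) :
    ∃ j, W j = c + 1 ∧ ∀ i ≠ j, W i = c := by
  have hconst : ∑ _i : ι, c = c * Fintype.card ι := by simp [mul_comm]
  obtain ⟨j, hj⟩ : ∃ j, c < W j := by
    by_contra! h
    have := sum_le_sum fun i (_ : i ∈ univ) => h i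
    omega
  have hW' := add_sum_erase univ W (mem_univ j)
  have hc := add_sum_erase univ (fun _ => c) (mem_univ j)
  have hrest : ∑ i ∈ univ.erase j, W i = ∑ i ∈ univ.erase j, c :=
    le_antisymm (by omega) (sum_le_sum fun i _ => hW i)
  have hall := (sum_eq_sum_iff_of_le fun i _ => hW i).mp hrest.symm
  exact ⟨j, by omega, fun i hi => (hall i (mem_erase.mpr ⟨hi, mem_univ i⟩)).symm⟩

section Window

variable {n : ℕ} [NeZero n]

def window (g : Fin n → ℕ) (i : Fin n) : ℕ := g i + g (i + 1) + g (i + 2)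

theorem sum_window (g : Fin n → ℕ) : ∑ i, window g i = 3 * ∑ i, g i := by
  have shift (a : Fin n) : ∑ i, g (i + a) = ∑ i, g i :=
    Fintype.sum_equiv (Equiv.addRight a) _ _ fun _ => rfl
  simp only [window, sum_add_distrib, shift]
  ring

end Window

theorem eq_two_around_of_window_eq_eight {m : ℕ} {g : Fin (m + 3) → ℕ} {j : Fin (m + 3)}
    (hg : ∀ i, 2 ≤ g i) (hj : window g j = 8) (hW : ∀ i ≠ j, window g i = 7) :
    g (j - 2) = 2 ∧ g (j - 1) = 2 ∧ g (j + 1) = 2 ∧ g (j + 3) = 2 ∧ g (j + 4) = 2 := by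
  have h1 : (1 : Fin (m + 3)) ≠ 0 := by simp
  have h2 : (2 : Fin (m + 3)) ≠ 0 := by
    simp [Fin.ext_iff, Nat.mod_eq_of_lt (show 2 < m + 3 by omega)]
  have hW₁ := hW (j - 2) (sub_eq_self.not.mpr h2)
  have hW₂ := hW (j - 1) (sub_eq_self.not.mpr h1)
  have hW₃ := hW (j + 1) (add_ne_left.mpr h1)
  have hW₄ := hW (j + 2) (add_ne_left.mpr h2)
  simp only [window, show j - 2 + 1 = j - 1 by ring, show j - 2 + 2 = j by ring,
    show j - 1 + 1 = j by ring, show j - 1 + 2 = j + 1 by ring, show j + 1 + 1 = j + 2 by ring,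
    show j + 1 + 2 = j + 3 by ring, show j + 2 + 1 = j + 3 by ring,
    show j + 2 + 2 = j + 4 by ring] at hj hW₁ hW₂ hW₃ hW₄
  have := hg (j - 2); have := hg (j - 1); have := hg j; have := hg (j + 1)
  have := hg (j + 2); have := hg (j + 3); have := hg (j + 4)
  omega

section Corona

variable {V : Type*} {G : SimpleGraph V}

theorem corona_bot_adj_inr {β : Type*} {v : V} {b : β} {x : V ⊕ V × β} :
    (corona G ⊥).Adj (.inr (v, b)) x ↔ x = .inl v := by
  rcases x with u | ⟨u, c⟩
  · exact ⟨fun h => by rw [show u = v from h], fun h => by cases h; rfl⟩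
  · simp [corona]

theorem corona_bot_adj_inl {v : V} {x : V ⊕ V × Fin 1} :
    (corona G ⊥).Adj (.inl v) x ↔ (∃ u, G.Adj v u ∧ x = .inl u) ∨ x = .inr (v, 0) := by
  rcases x with u | ⟨u, c⟩
  · simp [corona]
  · rw [Subsingleton.elim c 0]
    simpa [corona] using eq_comm

def weight (f : V ⊕ V × Fin 1 → ℕ) (v : V) : ℕ := f (.inl v) + f (.inr (v, 0))

theorem sum_weight [Fintype V] (f : V ⊕ V × Fin 1 → ℕ) : ∑ v, weight f v = ∑ x, f x := by
  simp [weight, Fintype.sum_sum_type, Fintype.sum_prod_type, sum_add_distrib]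

end Corona

namespace IsRDRD

variable {V : Type*} {G : SimpleGraph V} {f : V ⊕ V × Fin 1 → ℕ}

theorem one_le_pendant (hf : IsRDRD (corona G ⊥) f) (v : V) : 1 ≤ f (.inr (v, 0)) := by
  by_contra! h
  have h0 : f (.inr (v, 0)) = 0 := by omega
  obtain ⟨x, hx, hx0⟩ := hf.2.2.2 _ h0
  rw [corona_bot_adj_inr] at hx
  subst hx
  rcases hf.2.1 _ h0 with ⟨u, hu, hu3⟩ | ⟨u, w, huw, hu, hw, -, -⟩
  · rw [corona_bot_adj_inr] at hu
    subst hu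
    omega
  · rw [corona_bot_adj_inr] at hu hw
    exact huw (hu.trans hw.symm)

theorem two_le_of_pendant_eq_one (hf : IsRDRD (corona G ⊥) f) {v : V}
    (h : f (.inr (v, 0)) = 1) : 2 ≤ f (.inl v) := by
  obtain ⟨x, hx, hx2⟩ := hf.2.2.1 _ h
  rwa [corona_bot_adj_inr.mp hx] at hx2

theorem two_le_weight (hf : IsRDRD (corona G ⊥) f) (v : V) : 2 ≤ weight f v := by
  have := hf.one_le_pendant v
  have := fun h : f (.inr (v, 0)) = 1 => hf.two_le_of_pendant_eq_one h
  unfold weight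
  omega

theorem eq_zero_and_pendant_eq_two (hf : IsRDRD (corona G ⊥) f) {v : V} (hv : weight f v = 2) :
    f (.inl v) = 0 ∧ f (.inr (v, 0)) = 2 := by
  have := hf.one_le_pendant v
  have := fun h : f (.inr (v, 0)) = 1 => hf.two_le_of_pendant_eq_one h
  unfold weight at hv
  omega

theorem exists_adj_eq_zero_and_exists_adj_two_le (hf : IsRDRD (corona G ⊥) f) {v : V}
    (hv : weight f v = 2) :
    (∃ u, G.Adj v u ∧ f (.inl u) = 0) ∧ ∃ u, G.Adj v u ∧ 2 ≤ f (.inl u) := by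
  obtain ⟨h0, hp⟩ := hf.eq_zero_and_pendant_eq_two hv
  constructor
  · obtain ⟨x, hx, hx0⟩ := hf.2.2.2 _ h0
    rcases corona_bot_adj_inl.mp hx with ⟨u, hu, rfl⟩ | rfl
    · exact ⟨u, hu, hx0⟩
    · omega
  · rcases hf.2.1 _ h0 with ⟨x, hx, hx3⟩ | ⟨x, y, hxy, hx, hy, hx2, hy2⟩
    · rcases corona_bot_adj_inl.mp hx with ⟨u, hu, rfl⟩ | rfl
      · exact ⟨u, hu, by omega⟩
      · omega
    · rcases corona_bot_adj_inl.mp hx with ⟨u, hu, rfl⟩ | rfl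
      · exact ⟨u, hu, by omega⟩
      rcases corona_bot_adj_inl.mp hy with ⟨u, hu, rfl⟩ | rfl
      · exact ⟨u, hu, by omega⟩
      exact absurd rfl hxy

end IsRDRD

theorem cycleGraph_adj_iff_eq_sub_one_or_eq_add_one {k : ℕ} {v w : Fin (k + 2)} :
    (cycleGraph (k + 2)).Adj v w ↔ w = v - 1 ∨ w = v + 1 := by
  rw [← mem_neighborSet, cycleGraph_neighborSet]
  simp

namespace IsRDRD

variable {m : ℕ} {f : Fin (m + 3) ⊕ Fin (m + 3) × Fin 1 → ℕ}

theorem neighbors_zero_and_two_le_of_weight_eq_two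
    (hf : IsRDRD (corona (cycleGraph (m + 3)) ⊥) f) {v : Fin (m + 3)} (hv : weight f v = 2) :
    (f (.inl (v - 1)) = 0 ∧ 2 ≤ f (.inl (v + 1))) ∨
      (2 ≤ f (.inl (v - 1)) ∧ f (.inl (v + 1)) = 0) := by
  obtain ⟨⟨u, hu, hu0⟩, w, hw, hw2⟩ := hf.exists_adj_eq_zero_and_exists_adj_two_le hv
  rw [cycleGraph_adj_iff_eq_sub_one_or_eq_add_one] at hu hw
  rcases hu with rfl | rfl <;> rcases hw with rfl | rfl <;> omega

theorem seven_le_window (hf : IsRDRD (corona (cycleGraph (m + 3)) ⊥) f) (i : Fin (m + 3)) :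
    7 ≤ window (weight f) i := by
  have h₀ := hf.two_le_weight i
  have h₁ := hf.two_le_weight (i + 1)
  have h₂ := hf.two_le_weight (i + 2)
  by_contra! h
  unfold window at h
  have hmid := hf.neighbors_zero_and_two_le_of_weight_eq_two (v := i + 1) (by omega)
  rw [show i + 1 - 1 = i by ring, show i + 1 + 1 = i + 2 by ring] at hmid
  have := (hf.eq_zero_and_pendant_eq_two (v := i) (by omega)).1
  have := (hf.eq_zero_and_pendant_eq_two (v := i + 2) (by omega)).1
  omega

theorem not_weight_eq_two_pattern (hf : IsRDRD (corona (cycleGraph (m + 3)) ⊥) f)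
    (j : Fin (m + 3)) :
    ¬ (weight f (j - 2) = 2 ∧ weight f (j - 1) = 2 ∧ weight f (j + 1) = 2 ∧
      weight f (j + 3) = 2 ∧ weight f (j + 4) = 2) := by
  rintro ⟨h₁, h₂, h₃, h₄, h₅⟩
  have := (hf.eq_zero_and_pendant_eq_two h₁).1
  have := (hf.eq_zero_and_pendant_eq_two h₅).1
  have left := hf.neighbors_zero_and_two_le_of_weight_eq_two h₂
  have mid := hf.neighbors_zero_and_two_le_of_weight_eq_two h₃
  have right := hf.neighbors_zero_and_two_le_of_weight_eq_two h₄
  rw [show j - 1 - 1 = j - 2 by ring, show j - 1 + 1 = j by ring] at left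
  rw [show j + 1 - 1 = j by ring, show j + 1 + 1 = j + 2 by ring] at mid
  rw [show j + 3 - 1 = j + 2 by ring, show j + 3 + 1 = j + 4 by ring] at right
  omega

theorem seven_mul_le_three_mul_sum (hf : IsRDRD (corona (cycleGraph (m + 3)) ⊥) f) :
    7 * (m + 3) ≤ 3 * ∑ x, f x := by
  rw [← sum_weight, ← sum_window]
  simpa [mul_comm] using card_nsmul_le_sum univ _ 7 fun i _ => hf.seven_le_window i

theorem three_mul_sum_ne_seven_mul_add_one (hf : IsRDRD (corona (cycleGraph (m + 3)) ⊥) f) :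
    3 * ∑ x, f x ≠ 7 * (m + 3) + 1 := by
  intro h
  rw [← sum_weight, ← sum_window] at h
  obtain ⟨j, hj, hW⟩ :=
    exists_eq_add_one_of_sum_eq_mul_card_add_one hf.seven_le_window (by simpa using h)
  exact hf.not_weight_eq_two_pattern j (eq_two_around_of_window_eq_eight hf.two_le_weight hj hW)

end IsRDRD

section Construction

variable {V : Type*} [DecidableEq V]

def heavyLabeling (S : Finset V) : V ⊕ V × Fin 1 → ℕ
  | .inl v => if v ∈ S then 2 else 0
  | .inr (v, _) => if v ∈ S then 1 else 2

theorem isRDRD_heavyLabeling {G : SimpleGraph V} {S : Finset V}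
    (hS : ∀ v ∉ S, (∃ u, G.Adj v u ∧ u ∈ S) ∧ ∃ u, G.Adj v u ∧ u ∉ S) :
    IsRDRD (corona G ⊥) (heavyLabeling S) := by
  refine ⟨?_, ?_, ?_, ?_⟩
  · rintro (v | ⟨v, _⟩) <;> simp only [heavyLabeling] <;> split_ifs <;> omega
  · rintro (v | ⟨v, _⟩) h0
    · have hv : v ∉ S := by simpa [heavyLabeling] using h0
      obtain ⟨u, hu, huS⟩ := (hS v hv).1
      exact .inr ⟨.inl u, .inr (v, 0), by simp, hu, rfl, by simp [heavyLabeling, huS],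
        by simp [heavyLabeling, hv]⟩
    · simp only [heavyLabeling] at h0
      split_ifs at h0
  · rintro (v | ⟨v, _⟩) h1
    · simp only [heavyLabeling] at h1
      split_ifs at h1
      omega
    · have hv : v ∈ S := by by_contra hv; simp [heavyLabeling, hv] at h1
      exact ⟨.inl v, rfl, by simp [heavyLabeling, hv]⟩
  · rintro (v | ⟨v, _⟩) h0
    · have hv : v ∉ S := by simpa [heavyLabeling] using h0
      obtain ⟨u, hu, huS⟩ := (hS v hv).2
      exact ⟨.inl u, hu, by simp [heavyLabeling, huS]⟩
    · simp only [heavyLabeling] at h0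
      split_ifs at h0

theorem sum_heavyLabeling [Fintype V] (S : Finset V) :
    ∑ x, heavyLabeling S x = 2 * Fintype.card V + #S := by
  have hw (v : V) : weight (heavyLabeling S) v = 2 + if v ∈ S then 1 else 0 := by
    simp only [weight, heavyLabeling]
    split_ifs <;> rfl
  rw [← sum_weight]
  simp [hw, sum_add_distrib, mul_comm]

end Construction

theorem sum_range_ite_mod_three_eq_two (q : ℕ) :
    ∑ k ∈ range (3 * q), (if k % 3 = 2 then 1 else 0) = q := by
  induction q with
  | zero => rfl
  | succ q ih =>
    rw [mul_add_one, sum_range_add, ih]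
    simp only [sum_range_succ, sum_range_zero]
    split_ifs <;> omega

def cycleHeavy (n : ℕ) : Finset (Fin n) :=
  univ.filter fun i => i.val % 3 = 2 ∨ 3 * (n / 3) ≤ i.val

theorem card_cycleHeavy (n : ℕ) : #(cycleHeavy n) = n / 3 + n % 3 := by
  have key (q r : ℕ) :
      ∑ k ∈ range (3 * q + r), (if k % 3 = 2 ∨ 3 * q ≤ k then 1 else 0) = q + r := by
    rw [sum_range_add]
    congr 1
    · refine (sum_congr rfl fun k hk => ?_).trans (sum_range_ite_mod_three_eq_two q)
      simp [(mem_range.mp hk).not_ge]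
    · simp
  rw [cycleHeavy, card_filter,
    Fin.sum_univ_eq_sum_range (fun k => if k % 3 = 2 ∨ 3 * (n / 3) ≤ k then 1 else 0), ← key,
    Nat.div_add_mod]

theorem cycleHeavy_neighbors {n : ℕ} (i : Fin n) (hi : i ∉ cycleHeavy n) :
    (∃ u, (cycleGraph n).Adj i u ∧ u ∈ cycleHeavy n) ∧
      ∃ u, (cycleGraph n).Adj i u ∧ u ∉ cycleHeavy n := by
  have adj_of_val {u v : Fin n} (h : u.val + 1 = v.val ∨ v.val + 1 = u.val) :
      (cycleGraph n).Adj u v :=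
    pathGraph_le_cycleGraph (pathGraph_adj.mpr h)
  simp only [cycleHeavy, mem_filter, mem_univ, true_and, not_or, not_le] at hi ⊢
  have hsucc : i.val + 1 < n := by omega
  rcases (by omega : i.val % 3 = 0 ∨ i.val % 3 = 1) with h | h
  · refine ⟨?_, ⟨i.val + 1, hsucc⟩, adj_of_val (.inl rfl), by simp; omega⟩
    rcases Nat.eq_zero_or_pos i.val with h0 | hpos
    · obtain ⟨k, rfl⟩ : ∃ k, n = k + 2 := ⟨n - 2, by omega⟩
      obtain rfl : i = 0 := Fin.ext h0
      exact ⟨Fin.last (k + 1), by simp [cycleGraph_adj], by simp; omega⟩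
    · exact ⟨⟨i.val - 1, by omega⟩, adj_of_val (.inr (by simp; omega)), by simp; omega⟩
  · exact ⟨⟨⟨i.val + 1, hsucc⟩, adj_of_val (.inl rfl), by simp; omega⟩,
      ⟨i.val - 1, by omega⟩, adj_of_val (.inr (by simp; omega)), by simp; omega⟩

theorem stmt16 (n : ℕ) (hn : 3 ≤ n) :
    gammaRdR (corona (SimpleGraph.cycleGraph n) (⊥ : SimpleGraph (Fin 1))) =
      if n % 3 = 2 then (7 * n + 2) / 3 + 1 else (7 * n + 2) / 3 := by
  obtain ⟨m, rfl⟩ := Nat.exists_eq_add_of_le' hn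
  refine gammaRdR_eq_of_forall_le (isRDRD_heavyLabeling cycleHeavy_neighbors)
    (by rw [sum_heavyLabeling, Fintype.card_fin, card_cycleHeavy]; split_ifs <;> omega)
    fun f hf => ?_
  have := hf.seven_mul_le_three_mul_sum
  have := hf.three_mul_sum_ne_seven_mul_add_one
  split_ifs <;> omega
end
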